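/- ω₁ ≤ r ≤ tr ≤ c: the tree number (least size of a maximal subtree of ([ω]^ω, ⊆*)) is uncountable, at least the reaping number, and at most the continuum; in particular a maximal subtree of ([ω]^ω, ⊆*) of size continuum exists. -/

import Mathlib

/-- `A ⊆* B`: almost inclusion, `A \ B` is finite. -/
def AlmostSubset (A B : Set ℕ) : Prop := (A \ B).Finite

/-- `A` and `B` are `⊆*`-incomparable. -/
def StarIncomp (A B : Set ℕ) : Prop := ¬ AlmostSubset A B ∧ ¬ AlmostSubset B A

/-- The predecessors of `t` in `T` with respect to `⊆*` (including `t` itself). -/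
def StarPred (T : Set (Set ℕ)) (t : Set ℕ) : Set (Set ℕ) := {s ∈ T | AlmostSubset t s}

/-- `T` is a subtree of `([ω]^ω, ⊆*)`: all members are infinite, the largest element
`ω` belongs to `T`, distinct members of `T` are not almost equal (so `⊆*` is a genuine
partial order on `T`), and the predecessors of each node are well-ordered by reverse
`⊆*` (every nonempty subset of a predecessor set has a `⊆*`-greatest element). -/
def IsStarTree (T : Set (Set ℕ)) : Prop :=
  (∀ A ∈ T, A.Infinite) ∧ Set.univ ∈ T ∧
    (∀ s ∈ T, ∀ t ∈ T, AlmostSubset s t → AlmostSubset t s → s = t) ∧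
    ∀ t ∈ T, ∀ S ⊆ StarPred T t, S.Nonempty → ∃ m ∈ S, ∀ s ∈ S, AlmostSubset s m

/-- `T` end-extends `S` (as subtrees of `([ω]^ω, ⊆*)`). -/
def StarEndExt (S T : Set (Set ℕ)) : Prop :=
  S ⊆ T ∧ ∀ s ∈ S, StarPred T s = StarPred S s

/-- `T` is a maximal subtree of `([ω]^ω, ⊆*)`: for every infinite `C ⊆ ω` either some
`B ∈ T` satisfies `B ⊆* C`, or there are `⊆*`-incomparable `B, B' ∈ T` with
`C ⊆* B` and `C ⊆* B'`. -/
def IsMaxStarTree (T : Set (Set ℕ)) : Prop :=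
  IsStarTree T ∧ ∀ C : Set ℕ, C.Infinite →
    (∃ B ∈ T, AlmostSubset B C) ∨
      ∃ B ∈ T, ∃ B' ∈ T, StarIncomp B B' ∧ AlmostSubset C B ∧ AlmostSubset C B'

/-- `s` and `t` lie on the same level of `T`: their predecessor sets (which are
well-orders under `⊆*`) are order isomorphic, i.e. have the same order type. -/
def SameLevel (T : Set (Set ℕ)) (s t : Set ℕ) : Prop :=
  Nonempty ((fun a b : StarPred T s => AlmostSubset a.1 b.1) ≃r
    (fun a b : StarPred T t => AlmostSubset a.1 b.1))

/-- `T` has countable levels. -/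
def CountableLevels (T : Set (Set ℕ)) : Prop :=
  ∀ t ∈ T, {s ∈ T | SameLevel T s t}.Countable

/-- A reaping family. -/
def IsReaping (𝒜 : Set (Set ℕ)) : Prop :=
  (∀ A ∈ 𝒜, A.Infinite) ∧
    ∀ B : Set ℕ, B.Infinite → ∃ A ∈ 𝒜, (A ∩ B).Finite ∨ AlmostSubset A B

/-- The reaping number `𝔯`. -/
noncomputable def reapingNumber : Cardinal :=
  sInf {c | ∃ 𝒜 : Set (Set ℕ), IsReaping 𝒜 ∧ Cardinal.mk ↥𝒜 = c}

/-- The tree number `𝔱𝔯`. -/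
noncomputable def treeNumber : Cardinal :=
  sInf {c | ∃ T : Set (Set ℕ), IsMaxStarTree T ∧ Cardinal.mk ↥T = c}

/-! Given countably many infinite sets, a single strictly increasing sequence can visit each of
them infinitely often; putting every other visited point into `B` makes `B` split all of them,
so no countable family is reaping and `𝔯 ≥ ω₁`.

If `T` is a maximal tree and `C` is infinite, either some node `B ⊆* C`, or `C ⊆* B, B'` for
incomparable nodes and then `C` is almost disjoint from the infinite set `B \ B'`; so `T` together
with the differences of its nodes is reaping, and has size `|T|`.

Finally `ω` together with an almost disjoint family of size `𝔠` (the branches of `2^{<ω}`) is a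
tree. Unions of chains of end-extensions are trees, and a tree violating maximality at `C` is
end-extended by adding `C`; so by Zorn's lemma it extends to a maximal tree, of size `𝔠`. -/

open Cardinal

theorem AlmostSubset.refl (s : Set ℕ) : AlmostSubset s s := by
  simp [AlmostSubset]

theorem almostSubset_univ (s : Set ℕ) : AlmostSubset s Set.univ := by
  simp [AlmostSubset]

theorem AlmostSubset.trans {a b c : Set ℕ} (hab : AlmostSubset a b) (hbc : AlmostSubset b c) :
    AlmostSubset a c :=
  (hab.union hbc).subset fun x hx => by
    by_cases hb : x ∈ b
    · exact Or.inr ⟨hb, hx.2⟩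
    · exact Or.inl ⟨hx.1, hb⟩

theorem exists_strictMono_forall_mem (g : ℕ → Set ℕ) (hg : ∀ k, (g k).Infinite) :
    ∃ s : ℕ → ℕ, StrictMono s ∧ ∀ k, s k ∈ g k := by
  choose next hnext_mem hlt_next using fun k => (hg k).exists_gt
  let s : ℕ → ℕ := fun k => Nat.rec (next 0 0) (fun k a => next (k + 1) a) k
  refine ⟨s, strictMono_nat_of_lt_succ fun k => hlt_next _ _, fun k => ?_⟩
  cases k <;> exact hnext_mem _ _

theorem exists_splitting (f : ℕ → Set ℕ) (hf : ∀ n, (f n).Infinite) :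
    ∃ B : Set ℕ, ∀ n, (f n ∩ B).Infinite ∧ (f n \ B).Infinite := by
  obtain ⟨s, hs, hs_mem⟩ :=
    exists_strictMono_forall_mem (fun k => f (Nat.unpair k).1) fun k => hf _
  -- `s (pair n m)` is a point of `f n`; it goes into `B` iff `m` is even
  refine ⟨s '' {k | Even (Nat.unpair k).2}, fun n => ⟨?_, ?_⟩⟩
  · refine Set.infinite_of_injective_forall_mem (f := fun m => s (Nat.pair n (2 * m)))
      (fun a b h => by simpa using hs.injective h) fun m => ⟨?_, _, by simp, rfl⟩
    simpa using hs_mem (Nat.pair n (2 * m))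
  · refine Set.infinite_of_injective_forall_mem (f := fun m => s (Nat.pair n (2 * m + 1)))
      (fun a b h => by simpa using hs.injective h) fun m => ⟨?_, ?_⟩
    · simpa using hs_mem (Nat.pair n (2 * m + 1))
    · rintro ⟨k, hk, hks⟩
      rw [hs.injective hks] at hk
      simp at hk

theorem IsReaping.not_countable {𝒜 : Set (Set ℕ)} (h : IsReaping 𝒜) : ¬ 𝒜.Countable := by
  intro h𝒜
  obtain ⟨A₀, hA₀, -⟩ := h.2 Set.univ Set.infinite_univ
  obtain ⟨f, rfl⟩ := h𝒜.exists_eq_range ⟨A₀, hA₀⟩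
  obtain ⟨B, hB⟩ := exists_splitting f fun n => h.1 _ ⟨n, rfl⟩
  obtain ⟨_, ⟨n, rfl⟩, hfin | hsub⟩ := h.2 B ((hB 0).1.mono Set.inter_subset_right)
  · exact (hB n).1 hfin
  · exact (hB n).2 hsub

theorem reapingNumber_le_mk {𝒜 : Set (Set ℕ)} (h : IsReaping 𝒜) :
    reapingNumber ≤ #𝒜 :=
  csInf_le' ⟨𝒜, h, rfl⟩

theorem aleph_one_le_reapingNumber : ℵ₁ ≤ reapingNumber :=
  le_csInf ⟨_, _, ⟨fun _ hA => hA, fun B hB => ⟨B, hB, .inr (.refl B)⟩⟩, rfl⟩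
    fun _ ⟨_, h𝒜, h⟩ => h ▸ aleph_one_le_iff.mpr
      (not_le.mp (mt le_aleph0_iff_set_countable.mp h𝒜.not_countable))

theorem IsMaxStarTree.isReaping_union_diff {T : Set (Set ℕ)} (hT : IsMaxStarTree T) :
    IsReaping (T ∪ {D ∈ Set.image2 (· \ ·) T T | D.Infinite}) := by
  refine ⟨fun A hA => hA.elim (hT.1.1 A) And.right, fun C hC => ?_⟩
  obtain ⟨B, hB, hBC⟩ | ⟨B, hB, B', hB', hBB', hCB, hCB'⟩ := hT.2 C hC
  · exact ⟨B, .inl hB, .inr hBC⟩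
  · exact ⟨B \ B', .inr ⟨Set.mem_image2_of_mem hB hB', hBB'.1⟩,
      .inl (hCB'.subset fun x hx => ⟨hx.2, hx.1.2⟩)⟩

theorem reapingNumber_le_mk_of_isMaxStarTree {T : Set (Set ℕ)} (hT : IsMaxStarTree T) :
    reapingNumber ≤ #T := by
  have hle : reapingNumber ≤ max ℵ₀ #T :=
    calc reapingNumber ≤ #T + #T * #T :=
          (reapingNumber_le_mk hT.isReaping_union_diff).trans <|
            (mk_union_le _ _).trans <| add_le_add le_rfl <|
              (mk_le_mk_of_subset (Set.sep_subset _ _)).trans mk_image2_le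
      _ ≤ max (max #T (max (max #T #T) ℵ₀)) ℵ₀ :=
          (add_le_max _ _).trans (by gcongr; exact mul_le_max _ _)
      _ = max ℵ₀ #T := by simp [max_comm]
  exact (le_max_iff.mp hle).resolve_left
    (aleph_one_le_iff.mp aleph_one_le_reapingNumber).not_ge

theorem IsStarTree.exists_greatest_of_isChain {T S : Set (Set ℕ)} (hT : IsStarTree T)
    (hST : S ⊆ T) (hS : IsChain AlmostSubset S) (hne : S.Nonempty) :
    ∃ m ∈ S, ∀ s ∈ S, AlmostSubset s m := by
  obtain ⟨b, hb⟩ := hne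
  -- the members of `S` above `b` are predecessors of `b`, so they have a greatest element
  obtain ⟨m, ⟨hmS, -⟩, hm⟩ := hT.2.2.2 b (hST hb) {s ∈ S | AlmostSubset b s}
    (fun s hs => ⟨hST hs.1, hs.2⟩) ⟨b, hb, .refl b⟩
  refine ⟨m, hmS, fun s hs => ?_⟩
  rcases eq_or_ne s b with rfl | hsb
  · exact hm s ⟨hs, .refl s⟩
  · rcases hS hs hb hsb with hsb | hbs
    · exact hsb.trans (hm b ⟨hb, .refl b⟩)
    · exact hm s ⟨hs, hbs⟩

theorem IsStarTree.insert_of_isChain_starPred {T : Set (Set ℕ)} {C : Set ℕ} (hT : IsStarTree T)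
    (hC : C.Infinite)
    (hC_below : ∀ B ∈ T, ¬ AlmostSubset B C) (hC_chain : IsChain AlmostSubset (StarPred T C)) :
    IsStarTree (insert C T) ∧ StarEndExt T (insert C T) := by
  have hpred : ∀ t ∈ T, StarPred (insert C T) t = StarPred T t := by
    refine fun t ht => Set.ext fun s => ⟨?_, fun hs => ⟨.inr hs.1, hs.2⟩⟩
    rintro ⟨rfl | hs, hts⟩
    · exact absurd hts (hC_below t ht)
    · exact ⟨hs, hts⟩
  refine ⟨⟨?_, .inr hT.2.1, ?_, ?_⟩, Set.subset_insert C T, hpred⟩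
  · rintro A (rfl | hA)
    exacts [hC, hT.1 A hA]
  · rintro s (rfl | hs) t (rfl | ht) hst hts
    · rfl
    · exact absurd hts (hC_below t ht)
    · exact absurd hst (hC_below s hs)
    · exact hT.2.2.1 s hs t ht hst hts
  rintro t (rfl | ht) S hS hne
  · rcases (S ∩ T).eq_empty_or_nonempty with hST | hST
    · have hS_eq : ∀ s ∈ S, s = t := fun s hs =>
        (hS hs).1.resolve_right fun hsT => hST.subset ⟨hs, hsT⟩
      obtain ⟨s₀, hs₀⟩ := hne
      exact ⟨t, hS_eq s₀ hs₀ ▸ hs₀, fun s hs => hS_eq s hs ▸ .refl s⟩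
    · obtain ⟨m, hm, hm_max⟩ := hT.exists_greatest_of_isChain Set.inter_subset_right
        (hC_chain.mono fun s hs => show s ∈ StarPred T _ from ⟨hs.2, (hS hs.1).2⟩) hST
      refine ⟨m, hm.1, fun s hs => ?_⟩
      rcases (hS hs).1 with rfl | hsT
      · exact (hS hm.1).2
      · exact hm_max s ⟨hs, hsT⟩
  · rw [hpred t ht] at hS
    exact hT.2.2.2 t ht S hS hne

theorem StarEndExt.refl (T : Set (Set ℕ)) : StarEndExt T T :=
  ⟨subset_rfl, fun _ _ => rfl⟩

theorem StarEndExt.trans {S T U : Set (Set ℕ)} (hST : StarEndExt S T) (hTU : StarEndExt T U) :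
    StarEndExt S U :=
  ⟨hST.1.trans hTU.1, fun s hs => (hTU.2 s (hST.1 hs)).trans (hST.2 s hs)⟩

theorem starEndExt_sUnion_of_isChain {𝒞 : Set (Set (Set ℕ))} (h𝒞 : IsChain StarEndExt 𝒞)
    {T : Set (Set ℕ)} (hT : T ∈ 𝒞) : StarEndExt T (⋃₀ 𝒞) := by
  refine ⟨Set.subset_sUnion_of_mem hT, fun t ht => Set.ext fun s => ?_⟩
  refine ⟨fun ⟨⟨T', hT', hsT'⟩, hts⟩ => ?_, fun hs => ⟨⟨T, hT, hs.1⟩, hs.2⟩⟩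
  rcases eq_or_ne T T' with rfl | hne
  · exact ⟨hsT', hts⟩
  · rcases h𝒞 hT hT' hne with hTT' | hT'T
    · exact hTT'.2 t ht ▸ ⟨hsT', hts⟩
    · exact ⟨hT'T.1 hsT', hts⟩

theorem isStarTree_sUnion_of_isChain {𝒞 : Set (Set (Set ℕ))} (h𝒞 : IsChain StarEndExt 𝒞)
    (htree : ∀ T ∈ 𝒞, IsStarTree T) (hne : 𝒞.Nonempty) : IsStarTree (⋃₀ 𝒞) := by
  obtain ⟨T₀, hT₀⟩ := hne
  refine ⟨fun A ⟨T, hT, hA⟩ => (htree T hT).1 A hA, ⟨T₀, hT₀, (htree T₀ hT₀).2.1⟩, ?_, ?_⟩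
  · rintro s ⟨S, hS, hsS⟩ t ⟨T, hT, htT⟩
    rcases eq_or_ne S T with rfl | hne
    · exact (htree S hS).2.2.1 s hsS t htT
    · rcases h𝒞 hS hT hne with hST | hTS
      · exact (htree T hT).2.2.1 s (hST.1 hsS) t htT
      · exact (htree S hS).2.2.1 s hsS t (hTS.1 htT)
  · rintro t ⟨T, hT, htT⟩
    rw [(starEndExt_sUnion_of_isChain h𝒞 hT).2 t htT]
    exact (htree T hT).2.2.2 t htT

theorem exists_isMaxStarTree_superset {T₀ : Set (Set ℕ)} (hT₀ : IsStarTree T₀) :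
    ∃ M, IsMaxStarTree M ∧ T₀ ⊆ M := by
  have : Nonempty {T // IsStarTree T ∧ StarEndExt T₀ T} := ⟨⟨T₀, hT₀, .refl T₀⟩⟩
  obtain ⟨⟨M, hM, hT₀M⟩, hmax⟩ := exists_maximal_of_nonempty_chains_bounded
    (r := fun T T' : {T // IsStarTree T ∧ StarEndExt T₀ T} => StarEndExt T.1 T'.1)
    (fun c hc ⟨T, hT⟩ => by
      have hc' := hc.image_of_map_rel _ _ Subtype.val fun _ _ h => h
      refine ⟨⟨⋃₀ (Subtype.val '' c), isStarTree_sUnion_of_isChain hc' ?_ ⟨_, T, hT, rfl⟩,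
        T.2.2.trans (starEndExt_sUnion_of_isChain hc' ⟨T, hT, rfl⟩)⟩,
        fun T' hT' => starEndExt_sUnion_of_isChain hc' ⟨T', hT', rfl⟩⟩
      rintro _ ⟨T', -, rfl⟩
      exact T'.2.1)
    StarEndExt.trans
  refine ⟨M, ⟨hM, fun C hC => ?_⟩, hT₀M.1⟩
  by_contra! hC_max
  obtain ⟨hC_below, hC_split⟩ := hC_max
  have hC_chain : IsChain AlmostSubset (StarPred M C) := fun B hB B' hB' _ => by
    by_contra! hBB'
    exact hC_split B hB.1 B' hB'.1 hBB' hB.2 hB'.2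
  obtain ⟨hM', hMM'⟩ := hM.insert_of_isChain_starPred hC hC_below hC_chain
  exact hC_below C ((hmax ⟨_, hM', hT₀M.trans hMM'⟩ hMM').1 (Set.mem_insert C M)) (.refl C)

theorem isStarTree_insert_univ {𝒜 : Set (Set ℕ)} (h𝒜_inf : ∀ A ∈ 𝒜, A.Infinite)
    (h𝒜_ne_univ : ∀ A ∈ 𝒜, ¬ AlmostSubset Set.univ A)
    (h𝒜_antichain : 𝒜.Pairwise fun A B => ¬ AlmostSubset A B) :
    IsStarTree (insert Set.univ 𝒜) := by
  have hpred : ∀ t ∈ insert Set.univ 𝒜, StarPred (insert Set.univ 𝒜) t ⊆ {Set.univ, t} := by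
    rintro t ht s ⟨rfl | hs, hts⟩
    · exact .inl rfl
    rcases ht with rfl | ht
    · exact absurd hts (h𝒜_ne_univ s hs)
    · exact .inr (by_contra fun hst => h𝒜_antichain ht hs (Ne.symm hst) hts)
  refine ⟨?_, .inl rfl, ?_, fun t ht S hS hne => ?_⟩
  · rintro A (rfl | hA)
    exacts [Set.infinite_univ, h𝒜_inf A hA]
  · rintro s (rfl | hs) t (rfl | ht) hst hts
    · rfl
    · exact absurd hst (h𝒜_ne_univ t ht)
    · exact absurd hts (h𝒜_ne_univ s hs)
    · exact by_contra fun hne => h𝒜_antichain hs ht hne hst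
  by_cases huniv : Set.univ ∈ S
  · exact ⟨Set.univ, huniv, fun s _ => almostSubset_univ s⟩
  · have hS_eq : ∀ s ∈ S, s = t := fun s hs =>
      (hpred t ht (hS hs)).resolve_left fun h => huniv (h ▸ hs)
    obtain ⟨s₀, hs₀⟩ := hne
    exact ⟨t, hS_eq s₀ hs₀ ▸ hs₀, fun s hs => hS_eq s hs ▸ .refl s⟩

/-- The codes of the initial segments of the branch `x` of the binary tree `2^{<ω}`. -/
noncomputable def branchSet (x : ℕ → Bool) : Set ℕ :=
  Set.range fun n => Encodable.encode ((List.range n).map x)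

theorem branchSet_infinite (x : ℕ → Bool) : (branchSet x).Infinite :=
  Set.infinite_range_of_injective fun a b h => by
    simpa using congrArg List.length (Encodable.encode_injective h)

theorem branchSet_inter_finite {x y : ℕ → Bool} (hxy : x ≠ y) :
    (branchSet x ∩ branchSet y).Finite := by
  obtain ⟨d, hd⟩ := Function.ne_iff.mp hxy
  refine ((Set.finite_Iic d).image fun n => Encodable.encode ((List.range n).map x)).subset ?_
  rintro _ ⟨⟨n, rfl⟩, ⟨m, hm⟩⟩
  have hxy_n : (List.range m).map y = (List.range n).map x := Encodable.encode_injective hm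
  obtain rfl : m = n := by simpa using congrArg List.length hxy_n
  refine ⟨m, Set.mem_Iic.mpr (not_lt.mp fun hdm => hd ?_), rfl⟩
  simpa [hdm] using (congrArg (·[d]?) hxy_n).symm

theorem branchSet_diff_infinite {x y : ℕ → Bool} (hxy : x ≠ y) :
    (branchSet x \ branchSet y).Infinite := by
  rw [← Set.sdiff_self_inter]
  exact (branchSet_infinite x).sdiff (branchSet_inter_finite hxy)

theorem branchSet_injective : Function.Injective branchSet := fun x y h =>
  by_contra fun hxy => branchSet_diff_infinite hxy (by simp [h])

theorem isStarTree_insert_univ_range_branchSet :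
    IsStarTree (insert Set.univ (Set.range branchSet)) := by
  refine isStarTree_insert_univ (Set.forall_mem_range.mpr branchSet_infinite)
    (Set.forall_mem_range.mpr fun x h => ?_) ?_
  · have hx : (fun n => !x n) ≠ x := fun h' => by simpa using congrFun h' 0
    exact (branchSet_diff_infinite hx).mono (Set.sdiff_subset_sdiff_left (Set.subset_univ _)) h
  · rintro _ ⟨x, rfl⟩ _ ⟨y, rfl⟩ hne
    exact branchSet_diff_infinite (ne_of_apply_ne branchSet hne)

theorem exists_isMaxStarTree_mk_eq_continuum :
    ∃ M, IsMaxStarTree M ∧ #M = 𝔠 := by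
  obtain ⟨M, hM, hsub⟩ := exists_isMaxStarTree_superset isStarTree_insert_univ_range_branchSet
  refine ⟨M, hM, le_antisymm (mk_set_nat ▸ mk_set_le M) ?_⟩
  calc 𝔠 = #(ℕ → Bool) := by simp
    _ = #(Set.range branchSet) := (mk_range_eq _ branchSet_injective).symm
    _ ≤ #M := mk_le_mk_of_subset ((Set.subset_insert _ _).trans hsub)

/-- `ω₁ ≤ 𝔯 ≤ 𝔱𝔯 ≤ 𝔠`; in particular a maximal subtree of `([ω]^ω, ⊆*)` of size
continuum exists. -/
theorem omega1_le_r_le_tr_le_c :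
    Cardinal.aleph 1 ≤ reapingNumber ∧
    reapingNumber ≤ treeNumber ∧
    treeNumber ≤ Cardinal.continuum ∧
    ∃ T : Set (Set ℕ), IsMaxStarTree T ∧ Cardinal.mk ↥T = Cardinal.continuum := by
  obtain ⟨M, hM, hM_card⟩ := exists_isMaxStarTree_mk_eq_continuum
  exact ⟨aleph_one_le_reapingNumber,
    le_csInf ⟨_, M, hM, rfl⟩ fun _ ⟨_, hT, h⟩ => h ▸ reapingNumber_le_mk_of_isMaxStarTree hT,
    csInf_le' ⟨M, hM, hM_card⟩, M, hM, hM_card⟩
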